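/- Let 1 ≤ d ≤ n−1 and let M ∈ M_{n,d}(ℝ) be the block matrix M = (G; Σ) where G ∈ GL_d(ℝ) and Σ ∈ M_{n−d,d}(ℝ), and assume that the (n−d)·d entries of Σ form a family that is algebraically independent over the subfield ℚ(F) of ℝ generated by the set F of entries of G. Then the subspace A of ℝ^n spanned by the d columns of M has dimension d and is (e,1)-irrational for every e ∈ [1, n−1]. -/

import Mathlib

noncomputable section

/-- A subspace of `ℝ^n` is rational if it is spanned by vectors with rational coordinates. -/
def IsRationalSubspace {n : ℕ} (B : Submodule ℝ (EuclideanSpace ℝ (Fin n))) : Prop :=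
  ∃ s : Set (EuclideanSpace ℝ (Fin n)),
    (∀ v ∈ s, ∀ i, ∃ q : ℚ, v i = (q : ℝ)) ∧ Submodule.span ℝ s = B

/-- `A` is `(e, j)`-irrational: every rational subspace `B` of dimension `e` satisfies
`dim (A ∩ B) < j + max 0 (dim A + e - n)` (here `dim A + e - n` is truncated
subtraction, which equals `max 0 (dim A + e - n)`). -/
def IsIrrational {n : ℕ} (A : Submodule ℝ (EuclideanSpace ℝ (Fin n))) (e j : ℕ) : Prop :=
  ∀ B : Submodule ℝ (EuclideanSpace ℝ (Fin n)),
    IsRationalSubspace B → Module.finrank ℝ B = e →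
      Module.finrank ℝ ↥(A ⊓ B) < j + (Module.finrank ℝ A + e - n)

/-- The `j`-th column of the block matrix `M = (G; Σ)`, viewed as a vector of `ℝ^n`. -/
def blockColumn (n d : ℕ) (G : Matrix (Fin d) (Fin d) ℝ)
    (S : Matrix (Fin (n - d)) (Fin d) ℝ) (j : Fin d) : EuclideanSpace ℝ (Fin n) :=
  WithLp.toLp 2 fun i : Fin n =>
    if h : (i : ℕ) < d then G ⟨(i : ℕ), h⟩ j
    else S ⟨(i : ℕ) - d, by have := i.isLt; omega⟩ j

open Submodule Module Matrix

/-! ### Auxiliary lemmas -/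

lemma euclid_sum_apply {n r : ℕ} (c : Fin r → ℝ) (v : Fin r → EuclideanSpace ℝ (Fin n)) (i : Fin n) :
    (∑ a, c a • v a) i = ∑ a, c a * v a i := by
  rw [WithLp.ofLp_sum, Finset.sum_apply]
  simp

/-- A finite family of vectors in `ℝ^n` is linearly independent iff its Gram determinant is
nonzero. -/
lemma gram_det_ne_zero_iff {n r : ℕ} (v : Fin r → EuclideanSpace ℝ (Fin n)) :
    (Matrix.of fun a b : Fin r => ∑ i, v a i * v b i).det ≠ 0 ↔ LinearIndependent ℝ v := by
  constructor
  · intro hdet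
    rw [Fintype.linearIndependent_iff]
    intro c hc
    have hci : ∀ i, ∑ a, c a * v a i = 0 := by
      intro i
      rw [← euclid_sum_apply c v i, hc]
      rfl
    by_contra hcne
    have hex : ∃ w, w ≠ 0 ∧ w ᵥ* (Matrix.of fun a b : Fin r => ∑ i, v a i * v b i) = 0 := by
      refine ⟨c, fun h => hcne (by intro a; rw [h]; rfl), ?_⟩
      funext b
      simp only [Matrix.vecMul, dotProduct, Matrix.of_apply]
      calc ∑ a, c a * ∑ i, v a i * v b i
          = ∑ a, ∑ i, (c a * v a i) * v b i := by
            congr 1; funext a; rw [Finset.mul_sum]; congr 1; funext i; ring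
        _ = ∑ i, (∑ a, c a * v a i) * v b i := by
            rw [Finset.sum_comm]; congr 1; funext i; rw [Finset.sum_mul]
        _ = 0 := by simp [hci]
    rw [Matrix.exists_vecMul_eq_zero_iff] at hex
    exact hdet hex
  · intro hli
    intro hdet
    obtain ⟨c, hcne, hc⟩ := Matrix.exists_mulVec_eq_zero_iff.mpr hdet
    set w : Fin n → ℝ := fun i => ∑ b, c b * v b i with hw
    have hMc : ∀ a, ∑ b, (∑ i, v a i * v b i) * c b = 0 := by
      intro a
      have := congrFun hc a
      simpa [Matrix.mulVec, dotProduct] using this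
    have hwa : ∀ a, ∑ i, v a i * w i = 0 := by
      intro a
      calc ∑ i, v a i * w i = ∑ i, ∑ b, v a i * (c b * v b i) := by
            congr 1; funext i; rw [hw, Finset.mul_sum]
        _ = ∑ b, (∑ i, v a i * v b i) * c b := by
            rw [Finset.sum_comm]; congr 1; funext b; rw [Finset.sum_mul]; congr 1; funext i; ring
        _ = 0 := hMc a
    have hww : ∑ i, w i * w i = 0 := by
      calc ∑ i, w i * w i = ∑ i, ∑ a, (c a * v a i) * w i := by
            congr 1; funext i; rw [← Finset.sum_mul]
        _ = ∑ a, c a * ∑ i, v a i * w i := by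
            rw [Finset.sum_comm]; congr 1; funext a; rw [Finset.mul_sum]; congr 1; funext i; ring
        _ = 0 := by simp [hwa]
    have hw0 : ∀ i, w i = 0 := by
      intro i
      have h1 : ∀ i ∈ Finset.univ, (0:ℝ) ≤ w i * w i := fun i _ => mul_self_nonneg _
      have := (Finset.sum_eq_zero_iff_of_nonneg h1).mp hww i (Finset.mem_univ i)
      exact mul_self_eq_zero.mp this
    have hsum0 : ∑ b, c b • v b = 0 := by
      ext i
      rw [euclid_sum_apply]
      exact hw0 i
    exact hcne (funext (Fintype.linearIndependent_iff.mp hli c hsum0))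

section Greedy

variable {V : Type*} [AddCommGroup V] [Module ℝ V]

lemma exists_not_mem_two (U₁ U₂ : Submodule ℝ V) (h1 : U₁ ≠ ⊤) (h2 : U₂ ≠ ⊤) :
    ∃ x, x ∉ U₁ ∧ x ∉ U₂ := by
  have e1 : ∃ a, a ∉ U₁ := by
    by_contra h; push_neg at h; exact h1 (Submodule.eq_top_iff'.mpr h)
  have e2 : ∃ b, b ∉ U₂ := by
    by_contra h; push_neg at h; exact h2 (Submodule.eq_top_iff'.mpr h)
  obtain ⟨a, ha⟩ := e1
  obtain ⟨b, hb⟩ := e2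
  by_cases hab : a ∈ U₂
  · by_cases hba : b ∈ U₁
    · refine ⟨a + b, fun h => ha ?_, fun h => hb ?_⟩
      · have := U₁.sub_mem h hba; simpa using this
      · have := U₂.sub_mem h hab; simpa [add_comm] using this
    · exact ⟨b, hba, hb⟩
  · exact ⟨a, ha, hab⟩

lemma finrank_sup_span_singleton [FiniteDimensional ℝ V] (W : Submodule ℝ V) (w : V)
    (hw : w ∉ W) : finrank ℝ ↥(W ⊔ span ℝ {w}) = finrank ℝ W + 1 := by
  have hwne : w ≠ 0 := fun h => hw (h ▸ W.zero_mem)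
  have hinf : W ⊓ span ℝ {w} = ⊥ := by
    rw [eq_bot_iff]
    rintro x ⟨hxW, hxs⟩
    obtain ⟨c, rfl⟩ := Submodule.mem_span_singleton.mp hxs
    rcases eq_or_ne c 0 with rfl | hc
    · simp
    · exact absurd (by simpa [smul_smul, inv_mul_cancel₀ hc] using W.smul_mem c⁻¹ hxW) hw
  have := Submodule.finrank_sup_add_finrank_inf_eq W (span ℝ {w})
  rw [hinf, finrank_span_singleton hwne] at this
  simpa using this

lemma sup_span_inf_eq_bot (W E : Submodule ℝ V) (w : V) (hWE : W ⊓ E = ⊥)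
    (hw : w ∉ E ⊔ W) : (W ⊔ span ℝ {w}) ⊓ E = ⊥ := by
  rw [eq_bot_iff]
  rintro x ⟨hx1, hxE⟩
  obtain ⟨u, hu, z, hz, rfl⟩ := Submodule.mem_sup.mp hx1
  obtain ⟨c, rfl⟩ := Submodule.mem_span_singleton.mp hz
  rcases eq_or_ne c 0 with rfl | hc
  · simp only [zero_smul, add_zero] at *
    rw [← hWE]; exact ⟨hu, hxE⟩
  · exfalso
    apply hw
    have : w = c⁻¹ • ((u + c • w) - u) := by
      rw [add_sub_cancel_left, smul_smul, inv_mul_cancel₀ hc, one_smul]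
    rw [this]
    exact Submodule.smul_mem _ _ (Submodule.sub_mem _
      (Submodule.mem_sup_left hxE) (Submodule.mem_sup_right hu))

lemma ne_top_of_finrank_lt [FiniteDimensional ℝ V] {U : Submodule ℝ V}
    (h : finrank ℝ U < finrank ℝ V) : U ≠ ⊤ := by
  intro hU; rw [hU, finrank_top] at h; exact lt_irrefl _ h

/-- Given subspaces `E` and `B` of a finite dimensional space `V` with
`dim E + d ≤ dim V`, there is a `d`-dimensional subspace `W` intersecting `E` trivially and
in generic position with respect to `B`. -/
lemma exists_graph_subspace [FiniteDimensional ℝ V] (E B : Submodule ℝ V) (d : ℕ)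
    (hE : finrank ℝ E + d ≤ finrank ℝ V) :
    ∃ W : Submodule ℝ V, finrank ℝ W = d ∧ W ⊓ E = ⊥ ∧
      min (finrank ℝ V) (finrank ℝ B + d) ≤ finrank ℝ ↥(W ⊔ B) := by
  induction d with
  | zero =>
    refine ⟨⊥, finrank_bot ℝ V, bot_inf_eq _, ?_⟩
    rw [bot_sup_eq]
    exact le_trans (min_le_right _ _) (by omega)
  | succ i ih =>
    obtain ⟨W, hWrank, hWE, hWB⟩ := ih (by omega)
    have hEWlt : finrank ℝ ↥(E ⊔ W) < finrank ℝ V := by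
      have h1 := Submodule.finrank_sup_add_finrank_inf_eq E W
      have h2 := Submodule.finrank_le (E ⊓ W)
      omega
    have hEWne : E ⊔ W ≠ ⊤ := ne_top_of_finrank_lt hEWlt
    by_cases hcase : W ⊔ B = ⊤
    · obtain ⟨w, hw⟩ : ∃ w, w ∉ E ⊔ W := by
        by_contra h; push_neg at h; exact hEWne (Submodule.eq_top_iff'.mpr h)
      have hwW : w ∉ W := fun h => hw (Submodule.mem_sup_right h)
      refine ⟨W ⊔ span ℝ {w}, ?_, sup_span_inf_eq_bot W E w hWE hw, ?_⟩
      · rw [finrank_sup_span_singleton W w hwW, hWrank]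
      · have : W ⊔ span ℝ {w} ⊔ B = ⊤ := by
          rw [sup_assoc, sup_comm (span ℝ {w}) B, ← sup_assoc, hcase, top_sup_eq]
        rw [this, finrank_top]
        exact min_le_left _ _
    · obtain ⟨w, hw1, hw2⟩ := exists_not_mem_two (E ⊔ W) (W ⊔ B) hEWne hcase
      have hwW : w ∉ W := fun h => hw1 (Submodule.mem_sup_right h)
      refine ⟨W ⊔ span ℝ {w}, ?_, sup_span_inf_eq_bot W E w hWE hw1, ?_⟩
      · rw [finrank_sup_span_singleton W w hwW, hWrank]
      · have hres : W ⊔ span ℝ {w} ⊔ B = (W ⊔ B) ⊔ span ℝ {w} := by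
          rw [sup_assoc, sup_comm (span ℝ {w}) B, ← sup_assoc]
        rw [hres, finrank_sup_span_singleton (W ⊔ B) w hw2]
        have hle := Submodule.finrank_le (W ⊔ B)
        omega

end Greedy

/-! ### Projection to the first `d` coordinates -/

def projFirst (n d : ℕ) (h : d ≤ n) : EuclideanSpace ℝ (Fin n) →ₗ[ℝ] (Fin d → ℝ) where
  toFun := fun v j => v (Fin.castLE h j)
  map_add' := by intro x y; funext j; simp
  map_smul' := by intro c x; funext j; simp

lemma projFirst_surjective (n d : ℕ) (h : d ≤ n) : Function.Surjective (projFirst n d h) := by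
  intro y
  refine ⟨(WithLp.toLp 2 (fun i : Fin n => if hi : (i : ℕ) < d then y ⟨i, hi⟩ else 0) : EuclideanSpace ℝ (Fin n)), ?_⟩
  funext j
  simp only [projFirst, LinearMap.coe_mk, AddHom.coe_mk, WithLp.ofLp_toLp]
  rw [dif_pos (by simp [j.isLt] : ((Fin.castLE h j : Fin n) : ℕ) < d)]
  exact congrArg y (Fin.ext rfl)

lemma finrank_ker_projFirst (n d : ℕ) (h : d ≤ n) :
    finrank ℝ (LinearMap.ker (projFirst n d h)) + d = n := by
  have h1 := LinearMap.finrank_range_add_finrank_ker (projFirst n d h)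
  rw [LinearMap.range_eq_top.mpr (projFirst_surjective n d h)] at h1
  simp only [finrank_top] at h1
  rw [finrank_euclideanSpace_fin] at h1
  have h2 : finrank ℝ (Fin d → ℝ) = d := by simp
  omega

lemma projFirst_blockColumn (n d : ℕ) (h : d ≤ n) (G : Matrix (Fin d) (Fin d) ℝ)
    (X : Matrix (Fin (n - d)) (Fin d) ℝ) (j : Fin d) :
    projFirst n d h (blockColumn n d G X j) = fun i => G i j := by
  funext i
  simp only [projFirst, LinearMap.coe_mk, AddHom.coe_mk, blockColumn, WithLp.ofLp_toLp]
  rw [dif_pos (by simp [i.isLt] : ((Fin.castLE h i : Fin n) : ℕ) < d)]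
  exact congrArg (fun z => G z j) (Fin.ext rfl)

lemma blockColumn_linearIndependent (n d : ℕ) (h : d ≤ n) (G : Matrix (Fin d) (Fin d) ℝ)
    (X : Matrix (Fin (n - d)) (Fin d) ℝ) (hG : IsUnit G.det) :
    LinearIndependent ℝ (blockColumn n d G X) := by
  apply LinearIndependent.of_comp (projFirst n d h)
  have : (projFirst n d h) ∘ (blockColumn n d G X) = fun j => Gᵀ j := by
    funext j; exact projFirst_blockColumn n d h G X j
  rw [this]
  exact Matrix.linearIndependent_cols_iff_isUnit.mpr ((Matrix.isUnit_iff_isUnit_det G).mpr hG)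

lemma finrank_span_blockColumn (n d : ℕ) (h : d ≤ n) (G : Matrix (Fin d) (Fin d) ℝ)
    (X : Matrix (Fin (n - d)) (Fin d) ℝ) (hG : IsUnit G.det) :
    finrank ℝ ↥(span ℝ (Set.range (blockColumn n d G X))) = d := by
  rw [finrank_span_eq_card (blockColumn_linearIndependent n d h G X hG)]
  simp

lemma exists_li_subfamily {ι V : Type*} [Fintype ι] [AddCommGroup V] [Module ℝ V]
    [FiniteDimensional ℝ V] (u : ι → V) (r : ℕ)
    (hr : r ≤ finrank ℝ ↥(span ℝ (Set.range u))) :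
    ∃ f : Fin r → ι, LinearIndependent ℝ (u ∘ f) := by
  obtain ⟨t, hts, htspan, htli⟩ := exists_linearIndependent ℝ (Set.range u)
  have htfin : t.Finite := (Set.finite_range u).subset hts
  haveI := htfin.fintype
  have hcard : r ≤ Fintype.card t := by
    have := finrank_span_set_eq_card htli
    rw [htspan] at this
    rw [this] at hr
    rwa [Set.toFinset_card] at hr
  obtain ⟨f0⟩ : Nonempty (Fin r ↪ t) := by
    rw [← Fintype.card_fin r] at hcard
    exact Function.Embedding.nonempty_of_card_le hcard
  have hg : ∀ x : t, ∃ i, u i = (x : V) := fun x => hts x.2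
  choose g hgspec using hg
  refine ⟨fun a => g (f0 a), ?_⟩
  have heq : u ∘ (fun a => g (f0 a)) = (fun x : t => (x : V)) ∘ f0 := by
    funext a; exact hgspec (f0 a)
  rw [heq]
  exact htli.comp f0 f0.injective

/-- Ring homomorphisms commute with taking Gram-type determinants. -/
lemma map_gram_det {R S : Type*} [CommRing R] [CommRing S] (f : R →+* S) {r n : ℕ}
    (P : Fin r → Fin n → R) :
    f (Matrix.of fun a b : Fin r => ∑ i, P a i * P b i).det
      = (Matrix.of fun a b : Fin r => ∑ i, f (P a i) * f (P b i)).det := by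
  rw [RingHom.map_det]
  congr 1
  ext a b
  simp [Matrix.map_apply, map_sum]

/-! ### Main theorem -/

set_option maxHeartbeats 2000000 in
/-- Let `M = (G; Σ)` with `G ∈ GL_d(ℝ)` and `Σ ∈ M_{n-d,d}(ℝ)` whose entries are
algebraically independent over `ℚ(F)`, `F` being the set of entries of `G`. Then the span
`A` of the columns of `M` has dimension `d` and is `(e,1)`-irrational for all `e ∈ [1, n-1]`. -/
theorem span_blockColumns_irrational (n d : ℕ) (hd1 : 1 ≤ d) (hd2 : d ≤ n - 1)
    (G : Matrix (Fin d) (Fin d) ℝ) (S : Matrix (Fin (n - d)) (Fin d) ℝ)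
    (hG : IsUnit G.det)
    (hS : AlgebraicIndependent
      (↥(IntermediateField.adjoin ℚ (Set.range fun p : Fin d × Fin d => G p.1 p.2)))
      (fun p : Fin (n - d) × Fin d => S p.1 p.2)) :
    Module.finrank ℝ ↥(Submodule.span ℝ (Set.range (blockColumn n d G S))) = d ∧
    ∀ e : ℕ, 1 ≤ e → e ≤ n - 1 →
      IsIrrational (Submodule.span ℝ (Set.range (blockColumn n d G S))) e 1 := by
  have hn1 : 1 ≤ n := by omega
  have hdn : d < n := by omega
  have hdn' : d ≤ n := hdn.le
  set A := span ℝ (Set.range (blockColumn n d G S)) with hA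
  have hArank : finrank ℝ A = d := finrank_span_blockColumn n d hdn' G S hG
  refine ⟨hArank, ?_⟩
  intro e he1 he2 B hBrat hBe
  -- extract a finite rational spanning family of B
  obtain ⟨s, hsrat, hsspan⟩ := hBrat
  obtain ⟨t, hts, htspan, htli⟩ := exists_linearIndependent ℝ s
  have htfin : t.Finite := htli.finite
  haveI := htfin.fintype
  set N := Fintype.card t with hN
  set e0 : t ≃ Fin N := Fintype.equivFin t with he0
  set b : Fin N → EuclideanSpace ℝ (Fin n) := fun a => ↑(e0.symm a) with hb
  have hbspan : span ℝ (Set.range b) = B := by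
    have hrange : Set.range b = t := by
      rw [hb]
      have h1 : Set.range ((Subtype.val : t → EuclideanSpace ℝ (Fin n)) ∘ e0.symm)
          = Set.range (Subtype.val : t → EuclideanSpace ℝ (Fin n)) :=
        e0.symm.surjective.range_comp Subtype.val
      rw [show (fun a => ((e0.symm a : t) : EuclideanSpace ℝ (Fin n)))
          = (Subtype.val : t → EuclideanSpace ℝ (Fin n)) ∘ e0.symm from rfl, h1,
        Subtype.range_coe]
    rw [hrange, htspan, hsspan]
  set Kf := IntermediateField.adjoin ℚ (Set.range fun p : Fin d × Fin d => G p.1 p.2) with hKf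
  have hGmem : ∀ (i j : Fin d), G i j ∈ Kf :=
    fun i j => IntermediateField.subset_adjoin ℚ _ ⟨(i, j), rfl⟩
  have hbK : ∀ (a : Fin N) (i : Fin n), b a i ∈ Kf := by
    intro a i
    obtain ⟨q, hq⟩ := hsrat _ (hts (e0.symm a).2) i
    have hq' : b a i = (q : ℝ) := hq
    rw [hq']
    exact SubfieldClass.ratCast_mem _ q
  -- the subspace E of vectors vanishing on the first d coordinates
  set E := LinearMap.ker (projFirst n d hdn') with hE
  have hErank : finrank ℝ E + d = n := finrank_ker_projFirst n d hdn'
  obtain ⟨W, hWd, hWE, hWB⟩ := exists_graph_subspace E B d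
    (by rw [finrank_euclideanSpace_fin]; omega)
  rw [finrank_euclideanSpace_fin, hBe] at hWB
  -- build a real matrix S₀ whose block columns span W
  set fW := (projFirst n d hdn').comp W.subtype with hfW
  have hker : LinearMap.ker fW = ⊥ := by
    rw [LinearMap.ker_eq_bot']
    intro x hx
    have hxE : (x : EuclideanSpace ℝ (Fin n)) ∈ W ⊓ E := ⟨x.2, hx⟩
    rw [hWE] at hxE
    exact Subtype.ext (by simpa using hxE)
  have hrange : LinearMap.range fW = ⊤ := by
    apply Submodule.eq_top_of_finrank_eq
    have h1 := LinearMap.finrank_range_add_finrank_ker fW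
    rw [hker, finrank_bot] at h1
    have h2 : finrank ℝ ↥W = d := hWd
    have h3 : finrank ℝ (Fin d → ℝ) = d := by simp
    omega
  have hc : ∀ j : Fin d, ∃ x : W, fW x = fun i => G i j := by
    intro j
    have := LinearMap.range_eq_top.mp hrange (fun i => G i j)
    exact this
  choose c hcspec using hc
  set S₀ : Matrix (Fin (n - d)) (Fin d) ℝ :=
    fun iq j => (c j : EuclideanSpace ℝ (Fin n)) ⟨d + (iq : ℕ), by have := iq.isLt; omega⟩
    with hS₀
  have hbc : ∀ j, blockColumn n d G S₀ j = (c j : EuclideanSpace ℝ (Fin n)) := by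
    intro j
    ext i
    simp only [blockColumn, WithLp.ofLp_toLp]
    by_cases h : (i : ℕ) < d
    · rw [dif_pos h]
      have hthis := congrFun (hcspec j) ⟨(i : ℕ), h⟩
      simp only [hfW, LinearMap.comp_apply, Submodule.coe_subtype, projFirst,
        LinearMap.coe_mk, AddHom.coe_mk] at hthis
      have hfix : (Fin.castLE hdn' (⟨(i : ℕ), h⟩ : Fin d)) = i := Fin.ext rfl
      rw [← hthis, hfix]
    · rw [dif_neg h]
      show (c j : EuclideanSpace ℝ (Fin n)) ⟨d + ((i : ℕ) - d), by have := i.isLt; omega⟩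
        = (c j : EuclideanSpace ℝ (Fin n)) i
      exact congrArg _ (Fin.ext (show d + ((i : ℕ) - d) = (i : ℕ) by omega))
  have hWspan : span ℝ (Set.range (blockColumn n d G S₀)) = W := by
    apply Submodule.eq_of_le_of_finrank_le
    · rw [span_le]
      rintro x ⟨j, rfl⟩
      rw [hbc j]
      exact (c j).2
    · rw [hWd, finrank_span_blockColumn n d hdn' G S₀ hG]
  -- the combined family of vectors, as a function of the bottom block
  set u : Matrix (Fin (n - d)) (Fin d) ℝ → (Fin d ⊕ Fin N) → EuclideanSpace ℝ (Fin n) :=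
    fun X => Sum.elim (blockColumn n d G X) b with hu
  have huspan : ∀ X, span ℝ (Set.range (u X)) = span ℝ (Set.range (blockColumn n d G X)) ⊔ B := by
    intro X
    rw [hu]
    rw [Set.Sum.elim_range, Submodule.span_union, hbspan]
  set r := min n (d + e) with hr
  have hr0 : r ≤ finrank ℝ ↥(span ℝ (Set.range (u S₀))) := by
    rw [huspan, hWspan]
    omega
  obtain ⟨fι, hfli⟩ := exists_li_subfamily (u S₀) r hr0
  -- the polynomial family
  set σt := (Fin (n - d)) × (Fin d)
  set pv : (Fin d ⊕ Fin N) → Fin n → MvPolynomial σt ↥Kf := Sum.elim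
    (fun j i => if h : (i : ℕ) < d then MvPolynomial.C ⟨G ⟨(i : ℕ), h⟩ j, hGmem _ _⟩
      else MvPolynomial.X (⟨⟨(i : ℕ) - d, by have := i.isLt; omega⟩, j⟩ : σt))
    (fun l i => MvPolynomial.C ⟨b l i, hbK l i⟩) with hpv
  have hev : ∀ (X : Matrix (Fin (n - d)) (Fin d) ℝ) (κ : Fin d ⊕ Fin N) (i : Fin n),
      MvPolynomial.aeval (fun p : σt => X p.1 p.2) (pv κ i) = u X κ i := by
    intro X κ i
    cases κ with
    | inl j =>
      by_cases h : (i : ℕ) < d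
      · simp only [hpv, hu, Sum.elim_inl, blockColumn, WithLp.ofLp_toLp, dif_pos h, MvPolynomial.aeval_C]
        rfl
      · simp only [hpv, hu, Sum.elim_inl, blockColumn, WithLp.ofLp_toLp, dif_neg h, MvPolynomial.aeval_X]
    | inr l =>
      simp only [hpv, hu, Sum.elim_inr, MvPolynomial.aeval_C]
      rfl
  set gp : MvPolynomial σt ↥Kf :=
    (Matrix.of fun a b' : Fin r => ∑ i, pv (fι a) i * pv (fι b') i).det with hgp
  have hgpval : ∀ (X : Matrix (Fin (n - d)) (Fin d) ℝ),
      MvPolynomial.aeval (fun p : σt => X p.1 p.2) gp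
        = (Matrix.of fun a b' : Fin r => ∑ i, u X (fι a) i * u X (fι b') i).det := by
    intro X
    rw [hgp]
    have hcast : ∀ y : MvPolynomial σt ↥Kf,
        MvPolynomial.aeval (fun p : σt => X p.1 p.2) y
          = (MvPolynomial.aeval (fun p : σt => X p.1 p.2)).toRingHom y := fun y => rfl
    rw [hcast, map_gram_det]
    have hev' : ∀ (κ : Fin d ⊕ Fin N) (i : Fin n),
        (MvPolynomial.aeval (fun p : σt => X p.1 p.2)).toRingHom (pv κ i) = u X κ i :=
      fun κ i => hev X κ i
    congr 1
    ext a b'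
    simp only [Matrix.of_apply]
    refine Finset.sum_congr rfl fun i _ => ?_
    rw [hev', hev']
  have h₀ : MvPolynomial.aeval (fun p : σt => S₀ p.1 p.2) gp ≠ 0 := by
    rw [hgpval]
    exact (gram_det_ne_zero_iff (u S₀ ∘ fι)).mpr hfli
  have hgpne : gp ≠ 0 := fun h => h₀ (by rw [h, map_zero])
  have hinj := algebraicIndependent_iff_injective_aeval.mp hS
  have hSne : MvPolynomial.aeval (fun p : σt => S p.1 p.2) gp ≠ 0 := by
    intro h
    apply hgpne
    apply hinj
    rw [h, map_zero]
  have hliS : LinearIndependent ℝ (u S ∘ fι) := by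
    rw [hgpval] at hSne
    exact (gram_det_ne_zero_iff (u S ∘ fι)).mp hSne
  have hrle : r ≤ finrank ℝ ↥(A ⊔ B) := by
    have h1 : span ℝ (Set.range (u S ∘ fι)) ≤ A ⊔ B := by
      rw [span_le]
      rintro x ⟨a, rfl⟩
      have : (u S ∘ fι) a ∈ span ℝ (Set.range (u S)) := subset_span ⟨fι a, rfl⟩
      rwa [huspan, ← hA] at this
    have h2 : finrank ℝ ↥(span ℝ (Set.range (u S ∘ fι))) = r := by
      rw [finrank_span_eq_card hliS]
      simp
    calc r = finrank ℝ ↥(span ℝ (Set.range (u S ∘ fι))) := h2.symm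
      _ ≤ finrank ℝ ↥(A ⊔ B) := Submodule.finrank_mono h1
  have hsum := Submodule.finrank_sup_add_finrank_inf_eq A B
  rw [hArank, hBe] at hsum
  have hABle : finrank ℝ ↥(A ⊔ B) ≤ n := by
    have := Submodule.finrank_le (A ⊔ B)
    rwa [finrank_euclideanSpace_fin] at this
  rw [hArank]
  omega
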